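/- Let H be a bialgebra, A an algebra in the category ℒℛ(H) of Yetter-Drinfeld-Long bimodules, and 𝒜 an H-bimodule algebra. Then 𝒜 ♮ A (the L-R-smash product of 𝒜 with A viewed as an H-bicomodule algebra) is itself an H-bimodule algebra with H-actions h·(φ ♮ a) = h₁·φ ♮ h₂·a and (φ ♮ a)·h = φ·h₂ ♮ a·h₁. -/

import Mathlib

open TensorProduct

noncomputable section

namespace LR

variable {k : Type*} [Field k]

section Toolbox

variable {X Y Z W X' Y' : Type*}
  [AddCommMonoid X] [Module k X] [AddCommMonoid Y] [Module k Y]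
  [AddCommMonoid Z] [Module k Z] [AddCommMonoid W] [Module k W]
  [AddCommMonoid X'] [Module k X'] [AddCommMonoid Y'] [Module k Y']

/-- Expand the first tensor factor using `f : X →ₗ X' ⊗ Y'`. -/
def expand (f : X →ₗ[k] X' ⊗[k] Y') : X ⊗[k] Z →ₗ[k] X' ⊗[k] (Y' ⊗[k] Z) :=
  (TensorProduct.assoc k X' Y' Z).toLinearMap ∘ₗ (TensorProduct.map f LinearMap.id)

/-- Apply `f` to the first two factors of a right-nested triple tensor. -/
def app2 (f : X ⊗[k] Y →ₗ[k] X' ⊗[k] Y') :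
    X ⊗[k] (Y ⊗[k] Z) →ₗ[k] X' ⊗[k] (Y' ⊗[k] Z) :=
  (TensorProduct.assoc k X' Y' Z).toLinearMap ∘ₗ (TensorProduct.map f LinearMap.id)
    ∘ₗ (TensorProduct.assoc k X Y Z).symm.toLinearMap

/-- Contract the first two factors of a right-nested triple tensor with `m`. -/
def con2 (m : X ⊗[k] Y →ₗ[k] W) : X ⊗[k] (Y ⊗[k] Z) →ₗ[k] W ⊗[k] Z :=
  (TensorProduct.map m LinearMap.id) ∘ₗ (TensorProduct.assoc k X Y Z).symm.toLinearMap

/-- Swap the first two factors of a right-nested triple tensor. -/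
def swL : X ⊗[k] (Y ⊗[k] Z) →ₗ[k] Y ⊗[k] (X ⊗[k] Z) :=
  (TensorProduct.assoc k Y X Z).toLinearMap
    ∘ₗ (TensorProduct.map (TensorProduct.comm k X Y).toLinearMap LinearMap.id)
    ∘ₗ (TensorProduct.assoc k X Y Z).symm.toLinearMap

/-- Exchange the second and third factors of `(X ⊗ Y) ⊗ Z`. -/
def ex23 : (X ⊗[k] Y) ⊗[k] Z →ₗ[k] (X ⊗[k] Z) ⊗[k] Y :=
  (TensorProduct.assoc k X Z Y).symm.toLinearMap
    ∘ₗ (TensorProduct.map LinearMap.id (TensorProduct.comm k Y Z).toLinearMap)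
    ∘ₗ (TensorProduct.assoc k X Y Z).toLinearMap

/-- The componentwise multiplication on a tensor product of two
(not necessarily unital) multiplications. -/
def tensMul (m₁ : X ⊗[k] X →ₗ[k] X) (m₂ : Y ⊗[k] Y →ₗ[k] Y) :
    (X ⊗[k] Y) ⊗[k] (X ⊗[k] Y) →ₗ[k] X ⊗[k] Y :=
  (TensorProduct.map m₁ m₂) ∘ₗ (tensorTensorTensorComm k X Y X Y).toLinearMap

end Toolbox

section LRPair

variable {A B : Type*} [AddCommMonoid A] [Module k A] [AddCommMonoid B] [Module k B]

/-- `x ⊗ y ↦ Σ x·a'_S ⊗ y_S` where `S(y ⊗ a') = a'_S ⊗ y_S`. -/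
def rext (mA : A ⊗[k] A →ₗ[k] A) (S : B ⊗[k] A →ₗ[k] A ⊗[k] B) (a' : A) :
    A ⊗[k] B →ₗ[k] A ⊗[k] B :=
  (TensorProduct.map mA LinearMap.id)
    ∘ₗ (TensorProduct.assoc k A A B).symm.toLinearMap
    ∘ₗ (TensorProduct.map LinearMap.id (S ∘ₗ (TensorProduct.mk k B A).flip a'))

/-- `x ⊗ y ↦ Σ x_S ⊗ b_S · y` where `S(b ⊗ x) = x_S ⊗ b_S`. -/
def lext (mB : B ⊗[k] B →ₗ[k] B) (S : B ⊗[k] A →ₗ[k] A ⊗[k] B) (b : B) :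
    A ⊗[k] B →ₗ[k] A ⊗[k] B :=
  (TensorProduct.map LinearMap.id mB)
    ∘ₗ (TensorProduct.assoc k A B B).toLinearMap
    ∘ₗ (TensorProduct.map (S ∘ₗ (TensorProduct.mk k B A) b) LinearMap.id)

/-- `x ⊗ y ↦ Σ a_S · x ⊗ y_S` where `S(a ⊗ y) = a_S ⊗ y_S`. -/
def qlext (mA : A ⊗[k] A →ₗ[k] A) (S : A ⊗[k] B →ₗ[k] A ⊗[k] B) (a : A) :
    A ⊗[k] B →ₗ[k] A ⊗[k] B :=
  (TensorProduct.map (mA ∘ₗ (TensorProduct.comm k A A).toLinearMap) LinearMap.id)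
    ∘ₗ (TensorProduct.assoc k A A B).symm.toLinearMap
    ∘ₗ (TensorProduct.map LinearMap.id (S ∘ₗ (TensorProduct.mk k A B) a))

/-- `x ⊗ y ↦ Σ x_S ⊗ y · b'_S` where `S(x ⊗ b') = x_S ⊗ b'_S`. -/
def qrext (mB : B ⊗[k] B →ₗ[k] B) (S : A ⊗[k] B →ₗ[k] A ⊗[k] B) (b' : B) :
    A ⊗[k] B →ₗ[k] A ⊗[k] B :=
  (TensorProduct.map LinearMap.id (mB ∘ₗ (TensorProduct.comm k B B).toLinearMap))
    ∘ₗ (TensorProduct.assoc k A B B).toLinearMap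
    ∘ₗ (TensorProduct.map (S ∘ₗ (TensorProduct.mk k A B).flip b') LinearMap.id)

/-- `x ⊗ y ↦ Σ y ⊗ S(x ⊗ b')`. -/
def swQ (S : A ⊗[k] B →ₗ[k] A ⊗[k] B) (b' : B) :
    A ⊗[k] B →ₗ[k] B ⊗[k] (A ⊗[k] B) :=
  (TensorProduct.map LinearMap.id S)
    ∘ₗ (TensorProduct.map LinearMap.id ((TensorProduct.mk k A B).flip b'))
    ∘ₗ (TensorProduct.comm k A B).toLinearMap

/-- `x ⊗ y ↦ Σ v ⊗ (u ⊗ y)` where `S(b ⊗ x) = u ⊗ v`. -/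
def swR (S : B ⊗[k] A →ₗ[k] A ⊗[k] B) (b : B) :
    A ⊗[k] B →ₗ[k] B ⊗[k] (A ⊗[k] B) :=
  (TensorProduct.assoc k B A B).toLinearMap
    ∘ₗ (TensorProduct.map (TensorProduct.comm k A B).toLinearMap LinearMap.id)
    ∘ₗ (TensorProduct.map (S ∘ₗ (TensorProduct.mk k B A) b) LinearMap.id)

/-- `x ⊗ y ↦ Σ x ⊗ (v ⊗ u)` where `S(a' ⊗ y) = u ⊗ v`. -/
def swQ2 (S : A ⊗[k] B →ₗ[k] A ⊗[k] B) (a' : A) :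
    A ⊗[k] B →ₗ[k] A ⊗[k] (B ⊗[k] A) :=
  TensorProduct.map LinearMap.id
    ((TensorProduct.comm k A B).toLinearMap ∘ₗ S ∘ₗ (TensorProduct.mk k A B) a')

/-- `x ⊗ y ↦ Σ u ⊗ (v ⊗ x)` where `S(y ⊗ a) = u ⊗ v`. -/
def swR2 (S : B ⊗[k] A →ₗ[k] A ⊗[k] B) (a : A) :
    A ⊗[k] B →ₗ[k] A ⊗[k] (B ⊗[k] A) :=
  (TensorProduct.assoc k A B A).toLinearMap
    ∘ₗ (TensorProduct.map (S ∘ₗ (TensorProduct.mk k B A).flip a) LinearMap.id)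
    ∘ₗ (TensorProduct.comm k A B).toLinearMap

/-- `(a ⊗ b) ⊗ (a' ⊗ b') ↦ (a ⊗ b') ⊗ (b ⊗ a')`. -/
def lrRearr : (A ⊗[k] B) ⊗[k] (A ⊗[k] B) →ₗ[k] (A ⊗[k] B) ⊗[k] (B ⊗[k] A) :=
  (tensorTensorTensorComm k A B B A).toLinearMap
    ∘ₗ (TensorProduct.map LinearMap.id (TensorProduct.comm k A B).toLinearMap)

/-- The multiplication of the L-R-twisted tensor product:
`(a ⊗ b)(a' ⊗ b') = a_Q a'_R ⊗ b_R b'_Q`. -/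
def lrMulGen (mA : A ⊗[k] A →ₗ[k] A) (mB : B ⊗[k] B →ₗ[k] B)
    (Q : A ⊗[k] B →ₗ[k] A ⊗[k] B) (R : B ⊗[k] A →ₗ[k] A ⊗[k] B) :
    (A ⊗[k] B) ⊗[k] (A ⊗[k] B) →ₗ[k] A ⊗[k] B :=
  (TensorProduct.map mA (mB ∘ₗ (TensorProduct.comm k B B).toLinearMap))
    ∘ₗ (tensorTensorTensorComm k A B A B).toLinearMap
    ∘ₗ (TensorProduct.map Q R) ∘ₗ lrRearr

/-- `R : B ⊗ A → A ⊗ B` is a twisting map (w.r.t. the given multiplications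
and units). -/
def IsTwistingMap (mA : A ⊗[k] A →ₗ[k] A) (mB : B ⊗[k] B →ₗ[k] B)
    (oneA : A) (oneB : B) (R : B ⊗[k] A →ₗ[k] A ⊗[k] B) : Prop :=
  (∀ a : A, R (oneB ⊗ₜ a) = a ⊗ₜ oneB) ∧
  (∀ b : B, R (b ⊗ₜ oneA) = oneA ⊗ₜ b) ∧
  (∀ (a a' : A) (b : B), R (b ⊗ₜ mA (a ⊗ₜ a')) = rext mA R a' (R (b ⊗ₜ a))) ∧
  (∀ (a : A) (b b' : B), R (mB (b ⊗ₜ b') ⊗ₜ a) = lext mB R b (R (b' ⊗ₜ a)))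

/-- The axioms of an L-R-twisted tensor product `A _Q⊗_R B`. -/
def IsLRPair (mA : A ⊗[k] A →ₗ[k] A) (mB : B ⊗[k] B →ₗ[k] B)
    (oneA : A) (oneB : B)
    (Q : A ⊗[k] B →ₗ[k] A ⊗[k] B) (R : B ⊗[k] A →ₗ[k] A ⊗[k] B) : Prop :=
  IsTwistingMap mA mB oneA oneB R ∧
  (∀ a : A, Q (a ⊗ₜ oneB) = a ⊗ₜ oneB) ∧
  (∀ b : B, Q (oneA ⊗ₜ b) = oneA ⊗ₜ b) ∧
  (∀ (a a' : A) (b : B), Q (mA (a ⊗ₜ a') ⊗ₜ b) = qlext mA Q a (Q (a' ⊗ₜ b))) ∧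
  (∀ (a : A) (b b' : B), Q (a ⊗ₜ mB (b ⊗ₜ b')) = qrext mB Q b' (Q (a ⊗ₜ b))) ∧
  (∀ (a : A) (b b' : B), swQ Q b' (R (b ⊗ₜ a)) = swR R b (Q (a ⊗ₜ b'))) ∧
  (∀ (a a' : A) (b : B), swQ2 Q a' (R (b ⊗ₜ a)) = swR2 R a (Q (a' ⊗ₜ b)))

end LRPair

end LR

namespace LR

section Bialg

variable {k : Type*} [Field k]
variable {H : Type*} [Ring H] [Bialgebra k H]
variable {M : Type*} [AddCommMonoid M] [Module k M]

/-- `(M, mM, oneM)` together with the two actions `la`, `ra` is an `H`-bimodule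
algebra. -/
def IsBimoduleAlgebra (mM : M ⊗[k] M →ₗ[k] M) (oneM : M)
    (la : H ⊗[k] M →ₗ[k] M) (ra : M ⊗[k] H →ₗ[k] M) : Prop :=
  (∀ m : M, la ((1 : H) ⊗ₜ m) = m) ∧
  (∀ (g h : H) (m : M), la ((g * h) ⊗ₜ m) = la (g ⊗ₜ la (h ⊗ₜ m))) ∧
  (∀ m : M, ra (m ⊗ₜ (1 : H)) = m) ∧
  (∀ (m : M) (g h : H), ra (m ⊗ₜ (g * h)) = ra (ra (m ⊗ₜ g) ⊗ₜ h)) ∧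
  (∀ (h : H) (m : M) (g : H), ra (la (h ⊗ₜ m) ⊗ₜ g) = la (h ⊗ₜ ra (m ⊗ₜ g))) ∧
  (∀ (h : H) (x y : M),
    la (h ⊗ₜ mM (x ⊗ₜ y)) =
      (mM ∘ₗ TensorProduct.map (la ∘ₗ (TensorProduct.mk k H M).flip x)
        (la ∘ₗ (TensorProduct.mk k H M).flip y)) (Coalgebra.comul (R := k) h)) ∧
  (∀ h : H, la (h ⊗ₜ oneM) = Coalgebra.counit (R := k) h • oneM) ∧
  (∀ (h : H) (x y : M),
    ra (mM (x ⊗ₜ y) ⊗ₜ h) =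
      (mM ∘ₗ TensorProduct.map (ra ∘ₗ (TensorProduct.mk k M H) x)
        (ra ∘ₗ (TensorProduct.mk k M H) y)) (Coalgebra.comul (R := k) h)) ∧
  (∀ h : H, ra (oneM ⊗ₜ h) = Coalgebra.counit (R := k) h • oneM)

/-- `(M, mM, oneM)` together with the two coactions `ρl`, `ρr` is an `H`-bicomodule
algebra. -/
def IsBicomoduleAlgebra (mM : M ⊗[k] M →ₗ[k] M) (oneM : M)
    (ρl : M →ₗ[k] H ⊗[k] M) (ρr : M →ₗ[k] M ⊗[k] H) : Prop :=
  (∀ m : M, (TensorProduct.lid k M)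
      ((TensorProduct.map (Coalgebra.counit (R := k)) LinearMap.id) (ρl m)) = m) ∧
  (∀ m : M, (TensorProduct.map (Coalgebra.comul (R := k)) LinearMap.id) (ρl m) =
      (TensorProduct.assoc k H H M).symm
        ((TensorProduct.map LinearMap.id ρl) (ρl m))) ∧
  (∀ m : M, (TensorProduct.rid k M)
      ((TensorProduct.map LinearMap.id (Coalgebra.counit (R := k))) (ρr m)) = m) ∧
  (∀ m : M, (TensorProduct.map LinearMap.id (Coalgebra.comul (R := k))) (ρr m) =
      (TensorProduct.assoc k M H H)
        ((TensorProduct.map ρr LinearMap.id) (ρr m))) ∧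
  (∀ m : M, (TensorProduct.map LinearMap.id ρr) (ρl m) =
      (TensorProduct.assoc k H M H)
        ((TensorProduct.map ρl LinearMap.id) (ρr m))) ∧
  (ρl oneM = (1 : H) ⊗ₜ oneM) ∧
  (∀ x y : M, ρl (mM (x ⊗ₜ y)) =
      tensMul (LinearMap.mul' k H) mM (ρl x ⊗ₜ ρl y)) ∧
  (ρr oneM = oneM ⊗ₜ (1 : H)) ∧
  (∀ x y : M, ρr (mM (x ⊗ₜ y)) =
      tensMul mM (LinearMap.mul' k H) (ρr x ⊗ₜ ρr y))

variable {P : Type*} [AddCommMonoid P] [Module k P]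

/-- `R(u ⊗ φ) = u_{[-1]}·φ ⊗ u_{[0]}` built from a left coaction on `P` and a left
action on `M`. -/
def smashR (la : H ⊗[k] M →ₗ[k] M) (ρl : P →ₗ[k] H ⊗[k] P) :
    P ⊗[k] M →ₗ[k] M ⊗[k] P :=
  (TensorProduct.map la LinearMap.id) ∘ₗ ex23 ∘ₗ (TensorProduct.map ρl LinearMap.id)

/-- `Q(φ ⊗ u) = φ·u_{<1>} ⊗ u_{<0>}` built from a right coaction on `P` and a right
action on `M`. -/
def smashQ (ra : M ⊗[k] H →ₗ[k] M) (ρr : P →ₗ[k] P ⊗[k] H) :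
    M ⊗[k] P →ₗ[k] M ⊗[k] P :=
  (TensorProduct.map ra LinearMap.id)
    ∘ₗ (TensorProduct.assoc k M H P).symm.toLinearMap
    ∘ₗ (TensorProduct.map LinearMap.id
        ((TensorProduct.comm k P H).toLinearMap ∘ₗ ρr))

/-- `R(h ⊗ m) = δ(h)₁ · m ⊗ δ(h)₂` (the smash-product twisting map associated to a
comultiplication-like map `δ`). -/
def RsmashGen (la : H ⊗[k] M →ₗ[k] M) (δ : H →ₗ[k] H ⊗[k] H) :
    H ⊗[k] M →ₗ[k] M ⊗[k] H :=
  (TensorProduct.map la LinearMap.id) ∘ₗ ex23 ∘ₗ (TensorProduct.map δ LinearMap.id)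

/-- `Q(m ⊗ h) = m · δ(h)₂ ⊗ δ(h)₁`. -/
def QsmashGen (ra : M ⊗[k] H →ₗ[k] M) (δ : H →ₗ[k] H ⊗[k] H) :
    M ⊗[k] H →ₗ[k] M ⊗[k] H :=
  (TensorProduct.map ra LinearMap.id)
    ∘ₗ (TensorProduct.assoc k M H H).symm.toLinearMap
    ∘ₗ (TensorProduct.map LinearMap.id ((TensorProduct.comm k H H).toLinearMap ∘ₗ δ))

end Bialg

end LR

namespace LR

section YDL

variable {k : Type*} [Field k]
variable {H : Type*} [Ring H] [Bialgebra k H]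
variable {A : Type*} [Ring A] [Algebra k A]
variable {𝒜 : Type*} [Ring 𝒜] [Algebra k 𝒜]

/-- `A` is an algebra in the category `ℒℛ(H)` of Yetter-Drinfeld-Long bimodules:
it is an `H`-bimodule algebra and an `H`-bicomodule algebra, and the four
Yetter-Drinfeld/Long compatibility conditions hold. -/
def IsYDLAlgebra (la : H ⊗[k] A →ₗ[k] A) (ra : A ⊗[k] H →ₗ[k] A)
    (ρl : A →ₗ[k] H ⊗[k] A) (ρr : A →ₗ[k] A ⊗[k] H) : Prop :=
  IsBimoduleAlgebra (LinearMap.mul' k A) (1 : A) la ra ∧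
  IsBicomoduleAlgebra (LinearMap.mul' k A) (1 : A) ρl ρr ∧
  -- left-left Yetter-Drinfeld
  (∀ (h : H) (m : A),
    (TensorProduct.map (LinearMap.mul' k H) LinearMap.id)
        (ex23 ((TensorProduct.map (ρl ∘ₗ la ∘ₗ (TensorProduct.mk k H A).flip m)
          LinearMap.id) (Coalgebra.comul (R := k) h))) =
      (TensorProduct.map (LinearMap.mul' k H) la)
        ((tensorTensorTensorComm k H H H A)
          ((Coalgebra.comul (R := k) h) ⊗ₜ[k] (ρl m)))) ∧
  -- left-right Long
  (∀ (h : H) (m : A),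
    ρr (la (h ⊗ₜ m)) =
      (TensorProduct.map (la ∘ₗ (TensorProduct.mk k H A) h) LinearMap.id) (ρr m)) ∧
  -- right-right Yetter-Drinfeld
  (∀ (h : H) (m : A),
    (TensorProduct.comm k H A)
        ((TensorProduct.map (LinearMap.mul' k H) LinearMap.id)
          ((TensorProduct.assoc k H H A).symm
            ((TensorProduct.map LinearMap.id
                ((TensorProduct.comm k A H).toLinearMap ∘ₗ ρr ∘ₗ ra
                  ∘ₗ (TensorProduct.mk k A H) m))
              (Coalgebra.comul (R := k) h)))) =
      (TensorProduct.map ra (LinearMap.mul' k H))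
        ((tensorTensorTensorComm k A H H H)
          ((ρr m) ⊗ₜ[k] (Coalgebra.comul (R := k) h)))) ∧
  -- right-left Long
  (∀ (m : A) (h : H),
    ρl (ra (m ⊗ₜ h)) =
      (TensorProduct.map LinearMap.id (ra ∘ₗ (TensorProduct.mk k A H).flip h)) (ρl m))

/-- the left `H`-action `h·(φ ♮ a) = h₁·φ ♮ h₂·a` on `𝒜 ⊗ A`. -/
def Lact (la𝒜 : H ⊗[k] 𝒜 →ₗ[k] 𝒜) (laA : H ⊗[k] A →ₗ[k] A) :
    H ⊗[k] (𝒜 ⊗[k] A) →ₗ[k] 𝒜 ⊗[k] A :=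
  (TensorProduct.map la𝒜 laA) ∘ₗ (tensorTensorTensorComm k H H 𝒜 A).toLinearMap
    ∘ₗ (TensorProduct.map (Coalgebra.comul (R := k)) LinearMap.id)

/-- the right `H`-action `(φ ♮ a)·h = φ·h₂ ♮ a·h₁` on `𝒜 ⊗ A`. -/
def Ract (ra𝒜 : 𝒜 ⊗[k] H →ₗ[k] 𝒜) (raA : A ⊗[k] H →ₗ[k] A) :
    (𝒜 ⊗[k] A) ⊗[k] H →ₗ[k] 𝒜 ⊗[k] A :=
  (TensorProduct.map ra𝒜 raA) ∘ₗ (tensorTensorTensorComm k 𝒜 A H H).toLinearMap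
    ∘ₗ (TensorProduct.map LinearMap.id
        ((TensorProduct.comm k H H).toLinearMap ∘ₗ (Coalgebra.comul (R := k))))

/-- the left `H`-coaction `λ(a ♮ h) = a^{(-1)}h₁ ⊗ (a^{(0)} ♮ h₂)` on `A ⊗ H`. -/
def lamAH (ρlA : A →ₗ[k] H ⊗[k] A) : A ⊗[k] H →ₗ[k] H ⊗[k] (A ⊗[k] H) :=
  (TensorProduct.map (LinearMap.mul' k H) LinearMap.id)
    ∘ₗ (tensorTensorTensorComm k H A H H).toLinearMap
    ∘ₗ (TensorProduct.map ρlA (Coalgebra.comul (R := k)))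

/-- the right `H`-coaction `ρ(a ♮ h) = (a^{<0>} ♮ h₁) ⊗ h₂a^{<1>}` on `A ⊗ H`. -/
def rhoAH (ρrA : A →ₗ[k] A ⊗[k] H) : A ⊗[k] H →ₗ[k] (A ⊗[k] H) ⊗[k] H :=
  (TensorProduct.map LinearMap.id
      ((LinearMap.mul' k H) ∘ₗ (TensorProduct.comm k H H).toLinearMap))
    ∘ₗ (tensorTensorTensorComm k A H H H).toLinearMap
    ∘ₗ (TensorProduct.map ρrA (Coalgebra.comul (R := k)))

end YDL

end LR

/-! The module axioms hold componentwise on `𝒜 ♮ A`. For the measuring axioms, write the product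
as `(φ ♮ a)(φ' ♮ a') = Q(φ ⊗ a') ⋆ R(a ⊗ φ')`, with `Q(φ ⊗ a') = φ·a'^{<1>} ⊗ a'^{<0>}`,
`R(a ⊗ φ') = a^{(-1)}·φ' ⊗ a^{(0)}` and `⋆` the multiplication of `𝒜 ⊗ Aᵐᵒᵖ`. Both
`h·((φ ♮ a)(φ' ♮ a'))` and `(h₁·(φ ♮ a))(h₂·(φ' ♮ a'))` then expand over the fourfold coproduct
`h₁ ⊗ h₂ ⊗ h₃ ⊗ h₄`: the outer legs `h₁, h₄` act on `Q`, which commutes with them by the left-right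
Long condition, and the two sides differ only in the middle legs, which enter as
`h₂ a^{(-1)} ⊗ h₃·a^{(0)}` on one side and `(h₂·a)^{(-1)} h₃ ⊗ (h₂·a)^{(0)}` on the other. By
coassociativity `h₂ ⊗ h₃` is the coproduct of a single leg, so the left-left Yetter–Drinfeld
condition identifies the two. The right action is handled symmetrically with the right-left Long
and right-right Yetter–Drinfeld conditions. -/

open Coalgebra

namespace LR

section Sweedler

variable (k : Type*) [CommSemiring k] {H : Type*} [AddCommMonoid H] [Module k H] [Coalgebra k H]
variable {V : Type*} [AddCommMonoid V]

/-- The Sweedler sum `∑ f h₁ h₂ h₃ h₄` over `(Δ ⊗ Δ) (Δ h)`, computed from chosen representations of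
the coproducts; it only has intrinsic meaning when `f` is multilinear. -/
def sweedlerSum₄ (h : H) (f : H → H → H → H → V) : V :=
  ∑ i ∈ (ℛ k h).index, ∑ j ∈ (ℛ k i.1).index, ∑ l ∈ (ℛ k i.2).index, f j.1 j.2 l.1 l.2

variable {k}

theorem sum_counit_mul_counit {ι : Type*} {h : H} (r : Repr k h ι) :
    ∑ i ∈ r.index, counit (R := k) (r.left i) * counit (r.right i) = counit h := by
  simp_rw [← smul_eq_mul, ← map_smul, ← map_sum, sum_counit_smul]

theorem map_sweedlerSum₄ {V' F : Type*} [AddCommMonoid V'] [FunLike F V V']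
    [AddMonoidHomClass F V V'] (m : F) (h : H) (f : H → H → H → H → V) :
    m (sweedlerSum₄ k h f) = sweedlerSum₄ k h (fun h₁ h₂ h₃ h₄ => m (f h₁ h₂ h₃ h₄)) := by
  simp only [sweedlerSum₄, map_sum]

theorem sweedlerSum₄_add (h : H) (f g : H → H → H → H → V) :
    sweedlerSum₄ k h (fun h₁ h₂ h₃ h₄ => f h₁ h₂ h₃ h₄ + g h₁ h₂ h₃ h₄) =
      sweedlerSum₄ k h f + sweedlerSum₄ k h g := by
  simp only [sweedlerSum₄, Finset.sum_add_distrib]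

theorem sweedlerSum₄_zero (h : H) : sweedlerSum₄ k h (fun _ _ _ _ => (0 : V)) = 0 := by
  simp only [sweedlerSum₄, Finset.sum_const_zero]

variable [Module k V]

theorem sweedlerSum₄_linearMap (Φ : (H ⊗[k] H) ⊗[k] (H ⊗[k] H) →ₗ[k] V) (h : H) :
    sweedlerSum₄ k h (fun h₁ h₂ h₃ h₄ => Φ ((h₁ ⊗ₜ h₂) ⊗ₜ (h₃ ⊗ₜ h₄))) =
      Φ (TensorProduct.map comul comul (comul h)) := by
  rw [← (ℛ k h).eq, map_sum, map_sum]
  refine Finset.sum_congr rfl fun i _ => ?_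
  -- the legs of `ℛ k h` are `Prod.fst` and `Prod.snd`
  change _ = Φ (comul i.1 ⊗ₜ comul i.2)
  rw [← (ℛ k i.1).eq, ← (ℛ k i.2).eq, sum_tmul, map_sum]
  simp only [tmul_sum, map_sum]
  rfl

theorem map_comp_comul_comul {X Y : Type*} [AddCommMonoid X] [Module k X]
    [AddCommMonoid Y] [Module k Y] (P : H ⊗[k] H →ₗ[k] X) (Q : H ⊗[k] H →ₗ[k] Y) (h : H) :
    TensorProduct.map (P ∘ₗ comul) (Q ∘ₗ comul) (comul h) =
      sweedlerSum₄ k h (fun h₁ h₂ h₃ h₄ => P (h₁ ⊗ₜ h₂) ⊗ₜ Q (h₃ ⊗ₜ h₄)) := by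
  rw [TensorProduct.map_comp, LinearMap.comp_apply]
  exact (sweedlerSum₄_linearMap (TensorProduct.map P Q) h).symm

theorem lTensor_assoc_map_comul_comul_comul (h : H) :
    (TensorProduct.assoc k H H H).symm.toLinearMap.lTensor H
        (TensorProduct.assoc k H H (H ⊗[k] H) (TensorProduct.map comul comul (comul h))) =
      (comul.rTensor H).lTensor H (comul.lTensor H (comul h)) := by
  have hassoc : (TensorProduct.assoc k H H H).symm.toLinearMap.lTensor H ∘ₗ
      (TensorProduct.assoc k H H (H ⊗[k] H)).toLinearMap ∘ₗ comul.lTensor (H ⊗[k] H) ∘ₗ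
      (TensorProduct.assoc k H H H).symm.toLinearMap =
      ((TensorProduct.assoc k H H H).symm.toLinearMap ∘ₗ comul.lTensor H).lTensor H := by
    ext a b c
    simp
  have := LinearMap.congr_fun hassoc (comul.lTensor H (comul h))
  simp only [LinearMap.comp_apply, LinearEquiv.coe_coe] at this
  rw [← LinearMap.lTensor_comp_rTensor, LinearMap.comp_apply, ← coassoc_symm_apply, this,
    ← LinearMap.lTensor_comp_apply, LinearMap.comp_assoc, coassoc_symm,
    LinearMap.lTensor_comp_apply]

variable {W : Type*} [AddCommMonoid W] [Module k W]

/-- By coassociativity, `(Δ ⊗ Δ) ∘ Δ` is `Δ` applied to the middle leg of `(id ⊗ Δ) ∘ Δ`, so `F`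
and `G` are only ever evaluated on coproducts. -/
theorem sweedlerSum₄_middle_congr (Ξ : H ⊗[k] (W ⊗[k] H) →ₗ[k] V) {F G : H ⊗[k] H →ₗ[k] W}
    (hFG : ∀ e, F (comul e) = G (comul e)) (h : H) :
    sweedlerSum₄ k h (fun h₁ h₂ h₃ h₄ => Ξ (h₁ ⊗ₜ (F (h₂ ⊗ₜ h₃) ⊗ₜ h₄))) =
      sweedlerSum₄ k h (fun h₁ h₂ h₃ h₄ => Ξ (h₁ ⊗ₜ (G (h₂ ⊗ₜ h₃) ⊗ₜ h₄))) := by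
  have key : ∀ K : H ⊗[k] H →ₗ[k] W,
      sweedlerSum₄ k h (fun h₁ h₂ h₃ h₄ => Ξ (h₁ ⊗ₜ (K (h₂ ⊗ₜ h₃) ⊗ₜ h₄))) =
        Ξ (((K ∘ₗ comul).rTensor H).lTensor H (comul.lTensor H (comul h))) := by
    intro K
    calc _ = sweedlerSum₄ k h (fun h₁ h₂ h₃ h₄ => (Ξ ∘ₗ (K.rTensor H).lTensor H ∘ₗ
          (TensorProduct.assoc k H H H).symm.toLinearMap.lTensor H ∘ₗ
          (TensorProduct.assoc k H H (H ⊗[k] H)).toLinearMap) ((h₁ ⊗ₜ h₂) ⊗ₜ (h₃ ⊗ₜ h₄))) := rfl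
      _ = _ := by
        rw [sweedlerSum₄_linearMap]
        simp only [LinearMap.comp_apply, LinearEquiv.coe_coe]
        rw [lTensor_assoc_map_comul_comul_comul, LinearMap.rTensor_comp,
          LinearMap.lTensor_comp, LinearMap.comp_apply]
  rw [key, key, show F ∘ₗ comul = G ∘ₗ comul from LinearMap.ext hFG]

end Sweedler

section BimoduleAlgebra

variable {k : Type*} [Field k] {H : Type*} [Ring H] [Bialgebra k H]
variable {M : Type*} [AddCommMonoid M] [Module k M] {mM : M ⊗[k] M →ₗ[k] M} {oneM : M}
  {la : H ⊗[k] M →ₗ[k] M} {ra : M ⊗[k] H →ₗ[k] M}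

namespace IsBimoduleAlgebra

variable (hM : IsBimoduleAlgebra mM oneM la ra)
include hM

theorem one_la (m : M) : la (1 ⊗ₜ m) = m := hM.1 m

theorem mul_la (g h : H) (m : M) : la ((g * h) ⊗ₜ m) = la (g ⊗ₜ la (h ⊗ₜ m)) := hM.2.1 g h m

theorem ra_one (m : M) : ra (m ⊗ₜ 1) = m := hM.2.2.1 m

theorem ra_mul (m : M) (g h : H) : ra (m ⊗ₜ (g * h)) = ra (ra (m ⊗ₜ g) ⊗ₜ h) :=
  hM.2.2.2.1 m g h

theorem ra_la (h : H) (m : M) (g : H) : ra (la (h ⊗ₜ m) ⊗ₜ g) = la (h ⊗ₜ ra (m ⊗ₜ g)) :=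
  hM.2.2.2.2.1 h m g

theorem la_mul (x y : M) :
    la ∘ₗ (TensorProduct.mk k H M).flip (mM (x ⊗ₜ y)) =
      mM ∘ₗ TensorProduct.map (la ∘ₗ (TensorProduct.mk k H M).flip x)
        (la ∘ₗ (TensorProduct.mk k H M).flip y) ∘ₗ comul :=
  LinearMap.ext fun h => hM.2.2.2.2.2.1 h x y

theorem la_one (h : H) : la (h ⊗ₜ oneM) = counit (R := k) h • oneM := hM.2.2.2.2.2.2.1 h

theorem mul_ra (x y : M) :
    ra ∘ₗ TensorProduct.mk k M H (mM (x ⊗ₜ y)) =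
      mM ∘ₗ TensorProduct.map (ra ∘ₗ TensorProduct.mk k M H x)
        (ra ∘ₗ TensorProduct.mk k M H y) ∘ₗ comul :=
  LinearMap.ext fun h => hM.2.2.2.2.2.2.2.1 h x y

theorem one_ra (h : H) : ra (oneM ⊗ₜ h) = counit (R := k) h • oneM := hM.2.2.2.2.2.2.2.2 h

end IsBimoduleAlgebra

end BimoduleAlgebra

section YetterDrinfeld

variable {k : Type*} [Field k] {H : Type*} [Ring H] [Bialgebra k H]
variable {A : Type*} [Ring A] [Algebra k A]
variable (la : H ⊗[k] A →ₗ[k] A) (ra : A ⊗[k] H →ₗ[k] A)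
  (ρl : A →ₗ[k] H ⊗[k] A) (ρr : A →ₗ[k] A ⊗[k] H)

/- The two sides of the Yetter–Drinfeld conditions of `IsYDLAlgebra`, as maps of `u ⊗ v`:
`leftYD₁ a : (u·a)^{(-1)} v ⊗ (u·a)^{(0)}`, `leftYD₂ a : u a^{(-1)} ⊗ v·a^{(0)}`,
`rightYD₁ a : (a·v)^{<0>} ⊗ u (a·v)^{<1>}`, `rightYD₂ a : a^{<0>}·u ⊗ a^{<1>} v`. -/

def leftYD₁ (a : A) : H ⊗[k] H →ₗ[k] H ⊗[k] A :=
  TensorProduct.map (LinearMap.mul' k H) LinearMap.id ∘ₗ ex23 ∘ₗ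
    TensorProduct.map (ρl ∘ₗ la ∘ₗ (TensorProduct.mk k H A).flip a) LinearMap.id

def leftYD₂ (a : A) : H ⊗[k] H →ₗ[k] H ⊗[k] A :=
  TensorProduct.map (LinearMap.mul' k H) la ∘ₗ
    (tensorTensorTensorComm k H H H A).toLinearMap ∘ₗ
    (TensorProduct.mk k (H ⊗[k] H) (H ⊗[k] A)).flip (ρl a)

def rightYD₁ (a : A) : H ⊗[k] H →ₗ[k] A ⊗[k] H :=
  (TensorProduct.comm k H A).toLinearMap ∘ₗ TensorProduct.map (LinearMap.mul' k H) LinearMap.id ∘ₗ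
    (TensorProduct.assoc k H H A).symm.toLinearMap ∘ₗ
    TensorProduct.map LinearMap.id
      ((TensorProduct.comm k A H).toLinearMap ∘ₗ ρr ∘ₗ ra ∘ₗ TensorProduct.mk k A H a)

def rightYD₂ (a : A) : H ⊗[k] H →ₗ[k] A ⊗[k] H :=
  TensorProduct.map ra (LinearMap.mul' k H) ∘ₗ
    (tensorTensorTensorComm k A H H H).toLinearMap ∘ₗ
    TensorProduct.mk k (A ⊗[k] H) (H ⊗[k] H) (ρr a)

theorem leftYD₁_tmul (a : A) (u v : H) :
    leftYD₁ la ρl a (u ⊗ₜ v) = (LinearMap.mulRight k v).rTensor A (ρl (la (u ⊗ₜ a))) := by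
  simp only [leftYD₁, ex23, LinearMap.comp_apply, TensorProduct.map_tmul, LinearMap.flip_apply,
    TensorProduct.mk_apply, LinearMap.id_apply, LinearEquiv.coe_coe]
  induction ρl (la (u ⊗ₜ a)) using TensorProduct.induction_on with
  | zero => simp
  | tmul x c => simp
  | add x y hx hy => simp only [add_tmul, map_add, hx, hy]

theorem leftYD₂_tmul (a : A) (u v : H) :
    leftYD₂ la ρl a (u ⊗ₜ v) =
      TensorProduct.map (LinearMap.mulLeft k u) (la ∘ₗ TensorProduct.mk k H A v) (ρl a) := by
  simp only [leftYD₂, LinearMap.comp_apply, LinearMap.flip_apply, TensorProduct.mk_apply,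
    LinearEquiv.coe_coe]
  induction ρl a using TensorProduct.induction_on with
  | zero => simp
  | tmul x c => simp
  | add x y hx hy => simp only [tmul_add, map_add, hx, hy]

theorem rightYD₁_tmul (a : A) (u v : H) :
    rightYD₁ ra ρr a (u ⊗ₜ v) = (LinearMap.mulLeft k u).lTensor A (ρr (ra (a ⊗ₜ v))) := by
  simp only [rightYD₁, LinearMap.comp_apply, TensorProduct.map_tmul, TensorProduct.mk_apply,
    LinearMap.id_apply, LinearEquiv.coe_coe]
  induction ρr (ra (a ⊗ₜ v)) using TensorProduct.induction_on with
  | zero => simp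
  | tmul c x => simp
  | add x y hx hy => simp only [tmul_add, map_add, hx, hy]

theorem rightYD₂_tmul (a : A) (u v : H) :
    rightYD₂ ra ρr a (u ⊗ₜ v) =
      TensorProduct.map (ra ∘ₗ (TensorProduct.mk k A H).flip u) (LinearMap.mulRight k v)
        (ρr a) := by
  simp only [rightYD₂, LinearMap.comp_apply, TensorProduct.mk_apply, LinearEquiv.coe_coe]
  induction ρr a using TensorProduct.induction_on with
  | zero => simp
  | tmul c x => simp
  | add x y hx hy => simp only [add_tmul, map_add, hx, hy]

variable {la ra ρl ρr}

namespace IsYDLAlgebra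

variable (hA : IsYDLAlgebra la ra ρl ρr)
include hA

theorem isBimoduleAlgebra : IsBimoduleAlgebra (LinearMap.mul' k A) 1 la ra := hA.1

theorem leftYD₁_comul (a : A) (h : H) :
    leftYD₁ la ρl a (comul h) = leftYD₂ la ρl a (comul h) :=
  hA.2.2.1 h a

theorem coactR_la (h : H) (a : A) :
    ρr (la (h ⊗ₜ a)) = (la ∘ₗ TensorProduct.mk k H A h).rTensor H (ρr a) :=
  hA.2.2.2.1 h a

theorem rightYD₁_comul (a : A) (h : H) :
    rightYD₁ ra ρr a (comul h) = rightYD₂ ra ρr a (comul h) :=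
  hA.2.2.2.2.1 h a

theorem coactL_ra (a : A) (h : H) :
    ρl (ra (a ⊗ₜ h)) = (ra ∘ₗ (TensorProduct.mk k A H).flip h).lTensor H (ρl a) :=
  hA.2.2.2.2.2 a h

end IsYDLAlgebra

end YetterDrinfeld

section SmashProduct

variable {k : Type*} [Field k] {H : Type*} [Ring H] [Bialgebra k H]
variable {𝒜 A : Type*} [Ring 𝒜] [Algebra k 𝒜] [Ring A] [Algebra k A]

variable (k 𝒜 A) in
def tensorOpMul : (𝒜 ⊗[k] A) ⊗[k] (𝒜 ⊗[k] A) →ₗ[k] 𝒜 ⊗[k] A :=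
  tensMul (LinearMap.mul' k 𝒜) (LinearMap.mul' k A ∘ₗ (TensorProduct.comm k A A).toLinearMap)

@[simp]
theorem tensorOpMul_tmul (x y : 𝒜) (b c : A) :
    tensorOpMul k 𝒜 A ((x ⊗ₜ c) ⊗ₜ (y ⊗ₜ b)) = (x * y) ⊗ₜ (b * c) := by
  simp [tensorOpMul, tensMul]

theorem lrMulGen_tmul (Q : 𝒜 ⊗[k] A →ₗ[k] 𝒜 ⊗[k] A) (R : A ⊗[k] 𝒜 →ₗ[k] 𝒜 ⊗[k] A)
    (φ φ' : 𝒜) (a a' : A) :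
    lrMulGen (LinearMap.mul' k 𝒜) (LinearMap.mul' k A) Q R ((φ ⊗ₜ a) ⊗ₜ (φ' ⊗ₜ a')) =
      tensorOpMul k 𝒜 A (Q (φ ⊗ₜ a') ⊗ₜ R (a ⊗ₜ φ')) := by
  simp [lrMulGen, lrRearr, tensorOpMul, tensMul]

variable (la𝒜 : H ⊗[k] 𝒜 →ₗ[k] 𝒜) (ra𝒜 : 𝒜 ⊗[k] H →ₗ[k] 𝒜)
  (laA : H ⊗[k] A →ₗ[k] A) (raA : A ⊗[k] H →ₗ[k] A)
  (ρlA : A →ₗ[k] H ⊗[k] A) (ρrA : A →ₗ[k] A ⊗[k] H)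

theorem smashQ_tmul (φ : 𝒜) (a : A) :
    smashQ ra𝒜 ρrA (φ ⊗ₜ a) =
      (ra𝒜 ∘ₗ TensorProduct.mk k 𝒜 H φ).rTensor A (TensorProduct.comm k A H (ρrA a)) := by
  simp only [smashQ, LinearMap.comp_apply, TensorProduct.map_tmul, LinearMap.id_apply,
    LinearEquiv.coe_coe]
  induction TensorProduct.comm k A H (ρrA a) using TensorProduct.induction_on with
  | zero => simp
  | tmul g c => simp
  | add x y hx hy => simp only [tmul_add, map_add, hx, hy]

theorem smashR_tmul (a : A) (φ : 𝒜) :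
    smashR la𝒜 ρlA (a ⊗ₜ φ) = (la𝒜 ∘ₗ (TensorProduct.mk k H 𝒜).flip φ).rTensor A (ρlA a) := by
  simp only [smashR, ex23, LinearMap.comp_apply, TensorProduct.map_tmul, LinearMap.id_apply,
    LinearEquiv.coe_coe]
  induction ρlA a using TensorProduct.induction_on with
  | zero => simp
  | tmul g c => simp
  | add x y hx hy => simp only [add_tmul, map_add, hx, hy]

theorem Lact_comp_flip (φ : 𝒜) (a : A) :
    Lact la𝒜 laA ∘ₗ (TensorProduct.mk k H (𝒜 ⊗[k] A)).flip (φ ⊗ₜ a) =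
      TensorProduct.map (la𝒜 ∘ₗ (TensorProduct.mk k H 𝒜).flip φ)
        (laA ∘ₗ (TensorProduct.mk k H A).flip a) ∘ₗ comul := by
  ext h
  simp only [Lact, LinearMap.comp_apply, LinearMap.flip_apply, TensorProduct.mk_apply,
    TensorProduct.map_tmul, LinearMap.id_apply, LinearEquiv.coe_coe]
  induction comul (R := k) h using TensorProduct.induction_on with
  | zero => simp
  | tmul g g' => simp
  | add x y hx hy => simp only [add_tmul, map_add, hx, hy]

theorem Ract_comp_mk (φ : 𝒜) (a : A) :
    Ract ra𝒜 raA ∘ₗ TensorProduct.mk k (𝒜 ⊗[k] A) H (φ ⊗ₜ a) =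
      TensorProduct.map (ra𝒜 ∘ₗ TensorProduct.mk k 𝒜 H φ) (raA ∘ₗ TensorProduct.mk k A H a) ∘ₗ
        (TensorProduct.comm k H H).toLinearMap ∘ₗ comul := by
  ext h
  simp only [Ract, LinearMap.comp_apply, TensorProduct.mk_apply,
    TensorProduct.map_tmul, LinearMap.id_apply, LinearEquiv.coe_coe]
  induction comul (R := k) h using TensorProduct.induction_on with
  | zero => simp
  | tmul g g' => simp
  | add x y hx hy => simp only [tmul_add, map_add, hx, hy]

theorem Lact_tmul_comul (h : H) (φ : 𝒜) (a : A) :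
    Lact la𝒜 laA (h ⊗ₜ (φ ⊗ₜ a)) =
      TensorProduct.map (la𝒜 ∘ₗ (TensorProduct.mk k H 𝒜).flip φ)
        (laA ∘ₗ (TensorProduct.mk k H A).flip a) (comul h) :=
  LinearMap.congr_fun (Lact_comp_flip la𝒜 laA φ a) h

theorem Ract_tmul_comul (h : H) (φ : 𝒜) (a : A) :
    Ract ra𝒜 raA ((φ ⊗ₜ a) ⊗ₜ h) =
      TensorProduct.map (ra𝒜 ∘ₗ TensorProduct.mk k 𝒜 H φ) (raA ∘ₗ TensorProduct.mk k A H a)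
        (TensorProduct.comm k H H (comul h)) :=
  LinearMap.congr_fun (Ract_comp_mk ra𝒜 raA φ a) h

theorem Lact_tmul {ι : Type*} {h : H} (r : Repr k h ι) (φ : 𝒜) (a : A) :
    Lact la𝒜 laA (h ⊗ₜ (φ ⊗ₜ a)) =
      ∑ i ∈ r.index, la𝒜 (r.left i ⊗ₜ φ) ⊗ₜ laA (r.right i ⊗ₜ a) := by
  rw [Lact_tmul_comul, ← r.eq]
  simp

theorem Ract_tmul {ι : Type*} {h : H} (r : Repr k h ι) (φ : 𝒜) (a : A) :
    Ract ra𝒜 raA ((φ ⊗ₜ a) ⊗ₜ h) =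
      ∑ i ∈ r.index, ra𝒜 (φ ⊗ₜ r.right i) ⊗ₜ raA (a ⊗ₜ r.left i) := by
  rw [Ract_tmul_comul, ← r.eq]
  simp

end SmashProduct

section SmashBimodule

variable {k : Type*} [Field k] {H : Type*} [Ring H] [Bialgebra k H]
variable {𝒜 A : Type*} [Ring 𝒜] [Algebra k 𝒜] [Ring A] [Algebra k A]
variable {la𝒜 : H ⊗[k] 𝒜 →ₗ[k] 𝒜} {ra𝒜 : 𝒜 ⊗[k] H →ₗ[k] 𝒜}
  {laA : H ⊗[k] A →ₗ[k] A} {raA : A ⊗[k] H →ₗ[k] A}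
  {ρlA : A →ₗ[k] H ⊗[k] A} {ρrA : A →ₗ[k] A ⊗[k] H}
  (h𝒜 : IsBimoduleAlgebra (LinearMap.mul' k 𝒜) 1 la𝒜 ra𝒜)
include h𝒜

section

variable (hA : IsBimoduleAlgebra (LinearMap.mul' k A) 1 laA raA)
include hA

theorem Lact_one_tmul (m : 𝒜 ⊗[k] A) : Lact la𝒜 laA (1 ⊗ₜ m) = m := by
  induction m using TensorProduct.induction_on with
  | zero => simp
  | tmul φ a =>
    rw [Lact_tmul_comul, Bialgebra.comul_one, Algebra.TensorProduct.one_def]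
    simp [h𝒜.one_la, hA.one_la]
  | add x y hx hy => simp only [tmul_add, map_add, hx, hy]

theorem Lact_mul_tmul (g h : H) (m : 𝒜 ⊗[k] A) :
    Lact la𝒜 laA ((g * h) ⊗ₜ m) = Lact la𝒜 laA (g ⊗ₜ Lact la𝒜 laA (h ⊗ₜ m)) := by
  induction m using TensorProduct.induction_on with
  | zero => simp
  | tmul φ a =>
    rw [Lact_tmul la𝒜 laA ((ℛ k g).mul (ℛ k h)), Lact_tmul la𝒜 laA (ℛ k h), tmul_sum, map_sum,
      Repr.mul_index, Finset.sum_product, Finset.sum_comm]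
    simp only [Lact_tmul la𝒜 laA (ℛ k g), Repr.mul_left, Repr.mul_right, h𝒜.mul_la, hA.mul_la]
  | add x y hx hy => simp only [tmul_add, map_add, hx, hy]

theorem Ract_tmul_one (m : 𝒜 ⊗[k] A) : Ract ra𝒜 raA (m ⊗ₜ 1) = m := by
  induction m using TensorProduct.induction_on with
  | zero => simp
  | tmul φ a =>
    rw [Ract_tmul_comul, Bialgebra.comul_one, Algebra.TensorProduct.one_def]
    simp [h𝒜.ra_one, hA.ra_one]
  | add x y hx hy => simp only [add_tmul, map_add, hx, hy]

theorem Ract_tmul_mul (m : 𝒜 ⊗[k] A) (g h : H) :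
    Ract ra𝒜 raA (m ⊗ₜ (g * h)) = Ract ra𝒜 raA (Ract ra𝒜 raA (m ⊗ₜ g) ⊗ₜ h) := by
  induction m using TensorProduct.induction_on with
  | zero => simp
  | tmul φ a =>
    rw [Ract_tmul ra𝒜 raA ((ℛ k g).mul (ℛ k h)), Ract_tmul ra𝒜 raA (ℛ k g), sum_tmul, map_sum,
      Repr.mul_index, Finset.sum_product]
    simp only [Ract_tmul ra𝒜 raA (ℛ k h), Repr.mul_left, Repr.mul_right, h𝒜.ra_mul, hA.ra_mul]
  | add x y hx hy => simp only [add_tmul, map_add, hx, hy]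

theorem Ract_Lact_tmul (h : H) (m : 𝒜 ⊗[k] A) (g : H) :
    Ract ra𝒜 raA (Lact la𝒜 laA (h ⊗ₜ m) ⊗ₜ g) = Lact la𝒜 laA (h ⊗ₜ Ract ra𝒜 raA (m ⊗ₜ g)) := by
  induction m using TensorProduct.induction_on with
  | zero => simp
  | tmul φ a =>
    simp only [Lact_tmul la𝒜 laA (ℛ k h), Ract_tmul ra𝒜 raA (ℛ k g), sum_tmul, tmul_sum,
      map_sum, h𝒜.ra_la, hA.ra_la]
    exact Finset.sum_comm
  | add x y hx hy => simp only [tmul_add, add_tmul, map_add, hx, hy]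

theorem Lact_tmul_one_tmul_one (h : H) :
    Lact la𝒜 laA (h ⊗ₜ ((1 : 𝒜) ⊗ₜ (1 : A))) = counit (R := k) h • ((1 : 𝒜) ⊗ₜ (1 : A)) := by
  simp only [Lact_tmul la𝒜 laA (ℛ k h), h𝒜.la_one, hA.la_one, smul_tmul_smul,
    ← Finset.sum_smul, sum_counit_mul_counit]

theorem Ract_one_tmul_one_tmul (h : H) :
    Ract ra𝒜 raA (((1 : 𝒜) ⊗ₜ (1 : A)) ⊗ₜ h) = counit (R := k) h • ((1 : 𝒜) ⊗ₜ (1 : A)) := by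
  simp only [Ract_tmul ra𝒜 raA (ℛ k h), h𝒜.one_ra, hA.one_ra, smul_tmul_smul, mul_comm,
    ← Finset.sum_smul, sum_counit_mul_counit]

theorem Lact_tensorOpMul (h : H) (p q : 𝒜 ⊗[k] A) :
    Lact la𝒜 laA (h ⊗ₜ tensorOpMul k 𝒜 A (p ⊗ₜ q)) =
      sweedlerSum₄ k h fun h₁ h₂ h₃ h₄ => tensorOpMul k 𝒜 A
        (TensorProduct.map (la𝒜 ∘ₗ TensorProduct.mk k H 𝒜 h₁)
            (laA ∘ₗ TensorProduct.mk k H A h₄) p ⊗ₜ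
          TensorProduct.map (la𝒜 ∘ₗ TensorProduct.mk k H 𝒜 h₂)
            (laA ∘ₗ TensorProduct.mk k H A h₃) q) := by
  induction p using TensorProduct.induction_on with
  | zero => simp [sweedlerSum₄_zero]
  | add p p' hp hp' => simp only [add_tmul, tmul_add, map_add, hp, hp', sweedlerSum₄_add]
  | tmul X c =>
    induction q using TensorProduct.induction_on with
    | zero => simp [sweedlerSum₄_zero]
    | add q q' hq hq' => simp only [tmul_add, map_add, hq, hq', sweedlerSum₄_add]
    | tmul Y b =>
      have hXY := h𝒜.la_mul X Y
      have hbc := hA.la_mul b c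
      rw [LinearMap.mul'_apply] at hXY hbc
      rw [tensorOpMul_tmul, Lact_tmul_comul, hXY, hbc, ← LinearMap.comp_assoc,
        ← LinearMap.comp_assoc, map_comp_comul_comul]
      simp

theorem Ract_tensorOpMul (h : H) (p q : 𝒜 ⊗[k] A) :
    Ract ra𝒜 raA (tensorOpMul k 𝒜 A (p ⊗ₜ q) ⊗ₜ h) =
      sweedlerSum₄ k h fun h₁ h₂ h₃ h₄ => tensorOpMul k 𝒜 A
        (TensorProduct.map (ra𝒜 ∘ₗ (TensorProduct.mk k 𝒜 H).flip h₃)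
            (raA ∘ₗ (TensorProduct.mk k A H).flip h₂) p ⊗ₜ
          TensorProduct.map (ra𝒜 ∘ₗ (TensorProduct.mk k 𝒜 H).flip h₄)
            (raA ∘ₗ (TensorProduct.mk k A H).flip h₁) q) := by
  induction p using TensorProduct.induction_on with
  | zero => simp [sweedlerSum₄_zero]
  | add p p' hp hp' => simp only [add_tmul, map_add, hp, hp', sweedlerSum₄_add]
  | tmul X c =>
    induction q using TensorProduct.induction_on with
    | zero => simp [sweedlerSum₄_zero]
    | add q q' hq hq' => simp only [tmul_add, add_tmul, map_add, hq, hq', sweedlerSum₄_add]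
    | tmul Y b =>
      have hXY := h𝒜.mul_ra X Y
      have hbc := hA.mul_ra b c
      rw [LinearMap.mul'_apply] at hXY hbc
      rw [tensorOpMul_tmul, Ract_tmul_comul, hXY, hbc, TensorProduct.map_comm,
        ← LinearMap.comp_assoc, ← LinearMap.comp_assoc, map_comp_comul_comul, map_sweedlerSum₄]
      simp

end

theorem map_la_smashQ (hA : IsYDLAlgebra laA raA ρlA ρrA) (u v : H) (φ : 𝒜) (a : A) :
    TensorProduct.map (la𝒜 ∘ₗ TensorProduct.mk k H 𝒜 u) (laA ∘ₗ TensorProduct.mk k H A v)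
        (smashQ ra𝒜 ρrA (φ ⊗ₜ a)) =
      smashQ ra𝒜 ρrA (la𝒜 (u ⊗ₜ φ) ⊗ₜ laA (v ⊗ₜ a)) := by
  rw [smashQ_tmul, smashQ_tmul, hA.coactR_la]
  induction ρrA a using TensorProduct.induction_on with
  | zero => simp
  | tmul c g => simp [h𝒜.ra_la]
  | add x y hx hy => simp only [map_add, hx, hy]

theorem map_la_smashR (u v : H) (a : A) (φ : 𝒜) :
    TensorProduct.map (la𝒜 ∘ₗ TensorProduct.mk k H 𝒜 u) (laA ∘ₗ TensorProduct.mk k H A v)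
        (smashR la𝒜 ρlA (a ⊗ₜ φ)) =
      (la𝒜 ∘ₗ (TensorProduct.mk k H 𝒜).flip φ).rTensor A (leftYD₂ laA ρlA a (u ⊗ₜ v)) := by
  rw [smashR_tmul, leftYD₂_tmul]
  induction ρlA a using TensorProduct.induction_on with
  | zero => simp
  | tmul g c => simp [h𝒜.mul_la]
  | add x y hx hy => simp only [map_add, hx, hy]

theorem smashR_tmul_la (u v : H) (a : A) (φ : 𝒜) :
    smashR la𝒜 ρlA (laA (u ⊗ₜ a) ⊗ₜ la𝒜 (v ⊗ₜ φ)) =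
      (la𝒜 ∘ₗ (TensorProduct.mk k H 𝒜).flip φ).rTensor A (leftYD₁ laA ρlA a (u ⊗ₜ v)) := by
  rw [smashR_tmul, leftYD₁_tmul]
  induction ρlA (laA (u ⊗ₜ a)) using TensorProduct.induction_on with
  | zero => simp
  | tmul g c => simp [h𝒜.mul_la]
  | add x y hx hy => simp only [map_add, hx, hy]

theorem Lact_tmul_lrMulGen_eq_sweedlerSum₄ (hA : IsYDLAlgebra laA raA ρlA ρrA) (h : H)
    (φ φ' : 𝒜) (a a' : A) :
    Lact la𝒜 laA (h ⊗ₜ lrMulGen (LinearMap.mul' k 𝒜) (LinearMap.mul' k A)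
        (smashQ ra𝒜 ρrA) (smashR la𝒜 ρlA) ((φ ⊗ₜ a) ⊗ₜ (φ' ⊗ₜ a'))) =
      sweedlerSum₄ k h fun h₁ h₂ h₃ h₄ =>
        lrMulGen (LinearMap.mul' k 𝒜) (LinearMap.mul' k A) (smashQ ra𝒜 ρrA) (smashR la𝒜 ρlA)
          ((la𝒜 (h₁ ⊗ₜ φ) ⊗ₜ laA (h₂ ⊗ₜ a)) ⊗ₜ (la𝒜 (h₃ ⊗ₜ φ') ⊗ₜ laA (h₄ ⊗ₜ a'))) := by
  let Ξ : H ⊗[k] ((H ⊗[k] A) ⊗[k] H) →ₗ[k] 𝒜 ⊗[k] A :=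
    tensorOpMul k 𝒜 A ∘ₗ
      TensorProduct.map
        (smashQ ra𝒜 ρrA ∘ₗ TensorProduct.map (la𝒜 ∘ₗ (TensorProduct.mk k H 𝒜).flip φ)
          (laA ∘ₗ (TensorProduct.mk k H A).flip a'))
        ((la𝒜 ∘ₗ (TensorProduct.mk k H 𝒜).flip φ').rTensor A) ∘ₗ
      (TensorProduct.assoc k H H (H ⊗[k] A)).symm.toLinearMap ∘ₗ
      (TensorProduct.comm k (H ⊗[k] A) H).toLinearMap.lTensor H
  have hΞ : ∀ u v w, Ξ (u ⊗ₜ (w ⊗ₜ v)) = tensorOpMul k 𝒜 A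
      (smashQ ra𝒜 ρrA (la𝒜 (u ⊗ₜ φ) ⊗ₜ laA (v ⊗ₜ a')) ⊗ₜ
        (la𝒜 ∘ₗ (TensorProduct.mk k H 𝒜).flip φ').rTensor A w) := fun _ _ _ => rfl
  calc
    _ = sweedlerSum₄ k h fun h₁ h₂ h₃ h₄ => Ξ (h₁ ⊗ₜ (leftYD₂ laA ρlA a (h₂ ⊗ₜ h₃) ⊗ₜ h₄)) := by
        rw [lrMulGen_tmul, Lact_tensorOpMul h𝒜 hA.isBimoduleAlgebra]
        simp only [map_la_smashQ h𝒜 hA, map_la_smashR h𝒜, hΞ]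
    _ = sweedlerSum₄ k h fun h₁ h₂ h₃ h₄ => Ξ (h₁ ⊗ₜ (leftYD₁ laA ρlA a (h₂ ⊗ₜ h₃) ⊗ₜ h₄)) :=
        (sweedlerSum₄_middle_congr Ξ (hA.leftYD₁_comul a) h).symm
    _ = _ := by simp only [hΞ, lrMulGen_tmul, smashR_tmul_la h𝒜]

theorem Lact_tmul_lrMulGen (hA : IsYDLAlgebra laA raA ρlA ρrA) (h : H) (x y : 𝒜 ⊗[k] A) :
    Lact la𝒜 laA (h ⊗ₜ lrMulGen (LinearMap.mul' k 𝒜) (LinearMap.mul' k A)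
        (smashQ ra𝒜 ρrA) (smashR la𝒜 ρlA) (x ⊗ₜ y)) =
      (lrMulGen (LinearMap.mul' k 𝒜) (LinearMap.mul' k A) (smashQ ra𝒜 ρrA) (smashR la𝒜 ρlA) ∘ₗ
        TensorProduct.map (Lact la𝒜 laA ∘ₗ (TensorProduct.mk k H (𝒜 ⊗[k] A)).flip x)
          (Lact la𝒜 laA ∘ₗ (TensorProduct.mk k H (𝒜 ⊗[k] A)).flip y)) (comul h) := by
  induction x using TensorProduct.induction_on with
  | zero => simp
  | add x x' hx hx' =>
    simp only [add_tmul, tmul_add, map_add, LinearMap.comp_add, LinearMap.add_apply,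
      TensorProduct.map_add_left, hx, hx']
  | tmul φ a =>
    induction y using TensorProduct.induction_on with
    | zero => simp
    | add y y' hy hy' =>
      simp only [tmul_add, map_add, LinearMap.comp_add, LinearMap.add_apply,
        TensorProduct.map_add_right, hy, hy']
    | tmul φ' a' =>
      rw [Lact_tmul_lrMulGen_eq_sweedlerSum₄ h𝒜 hA, LinearMap.comp_apply, Lact_comp_flip,
        Lact_comp_flip, map_comp_comul_comul, map_sweedlerSum₄]
      rfl

theorem map_ra_smashQ (u v : H) (φ : 𝒜) (a : A) :
    TensorProduct.map (ra𝒜 ∘ₗ (TensorProduct.mk k 𝒜 H).flip v)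
        (raA ∘ₗ (TensorProduct.mk k A H).flip u) (smashQ ra𝒜 ρrA (φ ⊗ₜ a)) =
      (ra𝒜 ∘ₗ TensorProduct.mk k 𝒜 H φ).rTensor A
        (TensorProduct.comm k A H (rightYD₂ raA ρrA a (u ⊗ₜ v))) := by
  rw [smashQ_tmul, rightYD₂_tmul]
  induction ρrA a using TensorProduct.induction_on with
  | zero => simp
  | tmul c g => simp [h𝒜.ra_mul]
  | add x y hx hy => simp only [map_add, hx, hy]

theorem smashQ_ra_tmul_ra (u v : H) (φ : 𝒜) (a : A) :
    smashQ ra𝒜 ρrA (ra𝒜 (φ ⊗ₜ u) ⊗ₜ raA (a ⊗ₜ v)) =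
      (ra𝒜 ∘ₗ TensorProduct.mk k 𝒜 H φ).rTensor A
        (TensorProduct.comm k A H (rightYD₁ raA ρrA a (u ⊗ₜ v))) := by
  rw [smashQ_tmul, rightYD₁_tmul]
  induction ρrA (raA (a ⊗ₜ v)) using TensorProduct.induction_on with
  | zero => simp
  | tmul c g => simp [h𝒜.ra_mul]
  | add x y hx hy => simp only [map_add, hx, hy]

theorem map_ra_smashR (hA : IsYDLAlgebra laA raA ρlA ρrA) (u v : H) (a : A) (φ : 𝒜) :
    TensorProduct.map (ra𝒜 ∘ₗ (TensorProduct.mk k 𝒜 H).flip v)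
        (raA ∘ₗ (TensorProduct.mk k A H).flip u) (smashR la𝒜 ρlA (a ⊗ₜ φ)) =
      smashR la𝒜 ρlA (raA (a ⊗ₜ u) ⊗ₜ ra𝒜 (φ ⊗ₜ v)) := by
  rw [smashR_tmul, smashR_tmul, hA.coactL_ra]
  induction ρlA a using TensorProduct.induction_on with
  | zero => simp
  | tmul g c => simp [h𝒜.ra_la]
  | add x y hx hy => simp only [map_add, hx, hy]

theorem Ract_lrMulGen_tmul_eq_sweedlerSum₄ (hA : IsYDLAlgebra laA raA ρlA ρrA) (h : H)
    (φ φ' : 𝒜) (a a' : A) :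
    Ract ra𝒜 raA (lrMulGen (LinearMap.mul' k 𝒜) (LinearMap.mul' k A)
        (smashQ ra𝒜 ρrA) (smashR la𝒜 ρlA) ((φ ⊗ₜ a) ⊗ₜ (φ' ⊗ₜ a')) ⊗ₜ h) =
      sweedlerSum₄ k h fun h₁ h₂ h₃ h₄ =>
        lrMulGen (LinearMap.mul' k 𝒜) (LinearMap.mul' k A) (smashQ ra𝒜 ρrA) (smashR la𝒜 ρlA)
          ((ra𝒜 (φ ⊗ₜ h₂) ⊗ₜ raA (a ⊗ₜ h₁)) ⊗ₜ (ra𝒜 (φ' ⊗ₜ h₄) ⊗ₜ raA (a' ⊗ₜ h₃))) := by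
  let Ξ : H ⊗[k] ((A ⊗[k] H) ⊗[k] H) →ₗ[k] 𝒜 ⊗[k] A :=
    tensorOpMul k 𝒜 A ∘ₗ
      TensorProduct.map
        ((ra𝒜 ∘ₗ TensorProduct.mk k 𝒜 H φ).rTensor A ∘ₗ (TensorProduct.comm k A H).toLinearMap)
        (smashR la𝒜 ρlA ∘ₗ TensorProduct.map (raA ∘ₗ TensorProduct.mk k A H a)
          (ra𝒜 ∘ₗ TensorProduct.mk k 𝒜 H φ')) ∘ₗ
      (TensorProduct.leftComm k H (A ⊗[k] H) H).toLinearMap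
  have hΞ : ∀ u v w, Ξ (u ⊗ₜ (w ⊗ₜ v)) = tensorOpMul k 𝒜 A
      ((ra𝒜 ∘ₗ TensorProduct.mk k 𝒜 H φ).rTensor A (TensorProduct.comm k A H w) ⊗ₜ
        smashR la𝒜 ρlA (raA (a ⊗ₜ u) ⊗ₜ ra𝒜 (φ' ⊗ₜ v))) := fun _ _ _ => rfl
  calc
    _ = sweedlerSum₄ k h fun h₁ h₂ h₃ h₄ => Ξ (h₁ ⊗ₜ (rightYD₂ raA ρrA a' (h₂ ⊗ₜ h₃) ⊗ₜ h₄)) := by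
        rw [lrMulGen_tmul, Ract_tensorOpMul h𝒜 hA.isBimoduleAlgebra]
        simp only [map_ra_smashQ h𝒜, map_ra_smashR h𝒜 hA, hΞ]
    _ = sweedlerSum₄ k h fun h₁ h₂ h₃ h₄ => Ξ (h₁ ⊗ₜ (rightYD₁ raA ρrA a' (h₂ ⊗ₜ h₃) ⊗ₜ h₄)) :=
        (sweedlerSum₄_middle_congr Ξ (hA.rightYD₁_comul a') h).symm
    _ = _ := by simp only [hΞ, lrMulGen_tmul, smashQ_ra_tmul_ra h𝒜]

theorem Ract_lrMulGen_tmul (hA : IsYDLAlgebra laA raA ρlA ρrA) (h : H) (x y : 𝒜 ⊗[k] A) :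
    Ract ra𝒜 raA (lrMulGen (LinearMap.mul' k 𝒜) (LinearMap.mul' k A)
        (smashQ ra𝒜 ρrA) (smashR la𝒜 ρlA) (x ⊗ₜ y) ⊗ₜ h) =
      (lrMulGen (LinearMap.mul' k 𝒜) (LinearMap.mul' k A) (smashQ ra𝒜 ρrA) (smashR la𝒜 ρlA) ∘ₗ
        TensorProduct.map (Ract ra𝒜 raA ∘ₗ TensorProduct.mk k (𝒜 ⊗[k] A) H x)
          (Ract ra𝒜 raA ∘ₗ TensorProduct.mk k (𝒜 ⊗[k] A) H y)) (comul h) := by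
  induction x using TensorProduct.induction_on with
  | zero => simp
  | add x x' hx hx' =>
    simp only [add_tmul, map_add, LinearMap.comp_add, LinearMap.add_apply,
      TensorProduct.map_add_left, hx, hx']
  | tmul φ a =>
    induction y using TensorProduct.induction_on with
    | zero => simp
    | add y y' hy hy' =>
      simp only [tmul_add, add_tmul, map_add, LinearMap.comp_add, LinearMap.add_apply,
        TensorProduct.map_add_right, hy, hy']
    | tmul φ' a' =>
      rw [Ract_lrMulGen_tmul_eq_sweedlerSum₄ h𝒜 hA, LinearMap.comp_apply, Ract_comp_mk,
        Ract_comp_mk, ← LinearMap.comp_assoc, ← LinearMap.comp_assoc, map_comp_comul_comul,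
        map_sweedlerSum₄]
      rfl

end SmashBimodule

theorem lr_smash_product_bimodule_algebra
    {k : Type*} [Field k] {H A 𝒜 : Type*}
    [Ring H] [Bialgebra k H] [Ring A] [Algebra k A] [Ring 𝒜] [Algebra k 𝒜]
    (la𝒜 : H ⊗[k] 𝒜 →ₗ[k] 𝒜) (ra𝒜 : 𝒜 ⊗[k] H →ₗ[k] 𝒜)
    (h𝒜 : IsBimoduleAlgebra (LinearMap.mul' k 𝒜) (1 : 𝒜) la𝒜 ra𝒜)
    (laA : H ⊗[k] A →ₗ[k] A) (raA : A ⊗[k] H →ₗ[k] A)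
    (ρlA : A →ₗ[k] H ⊗[k] A) (ρrA : A →ₗ[k] A ⊗[k] H)
    (hA : IsYDLAlgebra laA raA ρlA ρrA) :
    IsBimoduleAlgebra
      (lrMulGen (LinearMap.mul' k 𝒜) (LinearMap.mul' k A)
        (smashQ ra𝒜 ρrA) (smashR la𝒜 ρlA))
      ((1 : 𝒜) ⊗ₜ[k] (1 : A)) (Lact la𝒜 laA) (Ract ra𝒜 raA) :=
  have hA' := hA.isBimoduleAlgebra
  ⟨Lact_one_tmul h𝒜 hA', Lact_mul_tmul h𝒜 hA', Ract_tmul_one h𝒜 hA', Ract_tmul_mul h𝒜 hA',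
    Ract_Lact_tmul h𝒜 hA', Lact_tmul_lrMulGen h𝒜 hA, Lact_tmul_one_tmul_one h𝒜 hA',
    Ract_lrMulGen_tmul h𝒜 hA, Ract_one_tmul_one_tmul h𝒜 hA'⟩

end LR
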